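/- Let n ≥ 3 and let Γ ⊂ O(n) be a finite subgroup acting freely on ℝⁿ\{0}. Let u be a Γ-symmetric minimizer against Γ-symmetric competitors (with Q = 1) on ℝⁿ. Then u is a spatially-local minimizer on ℝⁿ\{0}: for every x ∈ ℝⁿ\{0} there exists r > 0 such that the closed ball of radius r around x does not contain 0 and E(u, B_r(x)) ≤ E(v, B_r(x)) for every nonnegative locally Lipschitz v (not required to be Γ-symmetric) with v = u on ℝⁿ \ B_r(x). -/

import Mathlib

open MeasureTheory Metric Set Filter Topology
open scoped RealInnerProductSpace NNReal

noncomputable section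

/-- The Alt–Caffarelli energy `E_Q(u, U) = ∫_U |∇u|² + Q²·1_{u>0}`. -/
def acEnergy {n : ℕ} (Q : ℝ) (u : EuclideanSpace ℝ (Fin n) → ℝ)
    (U : Set (EuclideanSpace ℝ (Fin n))) : ℝ :=
  ∫ x in U, (‖gradient u x‖ ^ 2 + Q ^ 2 * Set.indicator {y | 0 < u y} (fun _ => (1 : ℝ)) x)

/-- `u` is invariant under the group `Γ` of linear isometries. -/
def IsSymmetricUnder {n : ℕ}
    (Γ : Subgroup (EuclideanSpace ℝ (Fin n) ≃ₗᵢ[ℝ] EuclideanSpace ℝ (Fin n)))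
    (u : EuclideanSpace ℝ (Fin n) → ℝ) : Prop :=
  ∀ g ∈ Γ, ∀ x, u (g x) = u x

/-- A nonnegative locally Lipschitz `Γ`-symmetric function `u` is a `Γ`-symmetric minimizer
against `Γ`-symmetric competitors (with `Q = 1`). -/
def IsSymMinimizer {n : ℕ}
    (Γ : Subgroup (EuclideanSpace ℝ (Fin n) ≃ₗᵢ[ℝ] EuclideanSpace ℝ (Fin n)))
    (u : EuclideanSpace ℝ (Fin n) → ℝ) : Prop :=
  (∀ x, 0 ≤ u x) ∧ LocallyLipschitz u ∧ IsSymmetricUnder Γ u ∧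
    ∀ R > 0, ∀ v : EuclideanSpace ℝ (Fin n) → ℝ, (∀ x, 0 ≤ v x) → LocallyLipschitz v →
      IsSymmetricUnder Γ v →
      (∀ x ∉ ball (0 : EuclideanSpace ℝ (Fin n)) R, v x = u x) →
      acEnergy 1 u (ball 0 R) ≤ acEnergy 1 v (ball 0 R)

section AuxAC

variable {n : ℕ}

local notation "E" => EuclideanSpace ℝ (Fin n)

lemma norm_gradient_eq' (f : E → ℝ) (x : E) : ‖gradient f x‖ = ‖fderiv ℝ f x‖ := by
  rw [gradient]
  exact LinearIsometryEquiv.norm_map _ _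

lemma norm_gradient_comp_iso (e : E ≃ₗᵢ[ℝ] E) (f : E → ℝ) (z : E) :
    ‖gradient (fun y => f (e y)) z‖ = ‖gradient f (e z)‖ := by
  rw [norm_gradient_eq', norm_gradient_eq']
  by_cases hd : DifferentiableAt ℝ f (e z)
  · have h1 : (fun y => f (e y)) = f ∘ e := rfl
    rw [h1, fderiv_comp z hd e.differentiableAt, e.fderiv]
    exact ContinuousLinearMap.opNorm_comp_linearIsometryEquiv _ _
  · have hd2 : ¬ DifferentiableAt ℝ (fun y => f (e y)) z := by
      intro h
      apply hd
      have h2 : f = (fun y => f (e y)) ∘ e.symm := by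
        funext w; simp
      rw [h2]
      exact DifferentiableAt.comp (e z) (by simpa using h) e.symm.differentiableAt
    rw [fderiv_zero_of_not_differentiableAt hd, fderiv_zero_of_not_differentiableAt hd2]

lemma gradient_measurable (f : E → ℝ) : Measurable (gradient f) := by
  have : gradient f = fun x => (InnerProductSpace.toDual ℝ E).symm (fderiv ℝ f x) := rfl
  rw [this]
  exact (InnerProductSpace.toDual ℝ E).symm.continuous.measurable.comp (measurable_fderiv ℝ f)

/-- A locally Lipschitz function has gradient bounded on bounded sets. -/
lemma gradient_bound (f : E → ℝ) (hf : LocallyLipschitz f) {S : Set E}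
    (hS : Bornology.IsBounded S) :
    ∃ C : ℝ, 0 ≤ C ∧ ∀ y ∈ S, ‖gradient f y‖ ≤ C := by
  have hK : IsCompact (closure S) := hS.isCompact_closure
  choose K t ht hlip using hf
  have hcov : ∀ z ∈ closure S, interior (t z) ∈ 𝓝 z := fun z _ =>
    interior_mem_nhds.2 (ht z)
  obtain ⟨T, hT⟩ := hK.elim_nhds_subcover (fun z => interior (t z)) hcov
  refine ⟨(T.sup K : ℝ≥0), (T.sup K).coe_nonneg, fun y hy => ?_⟩
  have hy' : y ∈ closure S := subset_closure hy
  obtain ⟨z, hzT, hyz⟩ := by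
    have := hT.2 hy'
    simpa using this
  have h1 : ‖fderiv ℝ f y‖ ≤ (K z : ℝ) :=
    norm_fderiv_le_of_lipschitzOn ℝ (isOpen_interior.mem_nhds hyz)
      ((hlip z).mono interior_subset)
  have h2 : (K z : ℝ) ≤ ((T.sup K : ℝ≥0) : ℝ) := NNReal.coe_le_coe.mpr (Finset.le_sup hzT)
  rw [norm_gradient_eq']
  exact h1.trans h2

/-- The Alt–Caffarelli integrand of a locally Lipschitz function is integrable on bounded
measurable sets. -/
lemma acIntegrable (f : E → ℝ) (hf : LocallyLipschitz f) {S : Set E}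
    (hSm : MeasurableSet S) (hS : Bornology.IsBounded S) :
    IntegrableOn (fun x => ‖gradient f x‖ ^ 2 +
      (1:ℝ) ^ 2 * Set.indicator {y | 0 < f y} (fun _ => (1 : ℝ)) x) S := by
  obtain ⟨C, hC0, hC⟩ := gradient_bound f hf hS
  have hmeas : Measurable (fun x => ‖gradient f x‖ ^ 2 +
      (1:ℝ) ^ 2 * Set.indicator {y | 0 < f y} (fun _ => (1 : ℝ)) x) := by
    apply Measurable.add
    · exact ((gradient_measurable f).norm).pow_const 2
    · apply Measurable.const_mul
      exact (measurable_const.indicator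
        ((isOpen_lt continuous_const hf.continuous).measurableSet))
  have hfin : volume S ≠ ⊤ := hS.measure_lt_top.ne
  apply Measure.integrableOn_of_bounded (M := C ^ 2 + 1) hfin hmeas.aestronglyMeasurable
  have : ∀ᵐ a ∂(volume.restrict S), a ∈ S := ae_restrict_mem hSm
  filter_upwards [this] with a ha
  have h1 : 0 ≤ ‖gradient f a‖ ^ 2 := sq_nonneg _
  have h2 : Set.indicator {y | 0 < f y} (fun _ => (1 : ℝ)) a ≤ 1 := by
    by_cases h : a ∈ {y | 0 < f y} <;> simp [Set.indicator_of_mem, Set.indicator_of_notMem, h]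
  have h3 : 0 ≤ Set.indicator {y | 0 < f y} (fun _ => (1 : ℝ)) a :=
    Set.indicator_nonneg (fun _ _ => zero_le_one) a
  rw [Real.norm_eq_abs, abs_of_nonneg (by nlinarith)]
  have h4 : ‖gradient f a‖ ^ 2 ≤ C ^ 2 := by
    have := hC a ha
    nlinarith [norm_nonneg (gradient f a)]
  nlinarith

lemma locallyLipschitz_finsum {ι : Type*} (s : Finset ι) (F : ι → E → ℝ)
    (h : ∀ i ∈ s, LocallyLipschitz (F i)) :
    LocallyLipschitz (fun y => ∑ i ∈ s, F i y) := by
  classical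
  induction s using Finset.induction_on with
  | empty => simpa using LocallyLipschitz.const (0:ℝ)
  | insert _ _ hnotmem ih =>
    rename_i a s'
    simp only [Finset.sum_insert hnotmem]
    exact (h a (Finset.mem_insert_self a s')).add
      (ih (fun i hi => h i (Finset.mem_insert_of_mem hi)))

end AuxAC

section Main

variable {n : ℕ}

local notation "E" => EuclideanSpace ℝ (Fin n)

set_option maxHeartbeats 1000000 in
/-- A `Γ`-symmetric minimizer against `Γ`-symmetric competitors on `ℝⁿ` (`n ≥ 3`, with `Γ ⊂ O(n)`
finite acting freely on `ℝⁿ\{0}`) is a spatially-local minimizer on `ℝⁿ\{0}`: around every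
`x ≠ 0` there is a small ball on which `u` minimizes against *all* competitors. -/
theorem symMinimizer_is_spatially_local_minimizer {n : ℕ} (hn : 3 ≤ n)
    (Γ : Subgroup (EuclideanSpace ℝ (Fin n) ≃ₗᵢ[ℝ] EuclideanSpace ℝ (Fin n)))
    (hfin : Finite Γ)
    (hfree : ∀ g ∈ Γ, (∃ x : EuclideanSpace ℝ (Fin n), x ≠ 0 ∧ g x = x) → g = 1)
    (u : EuclideanSpace ℝ (Fin n) → ℝ)
    (hmin : IsSymMinimizer Γ u) :
    ∀ x : EuclideanSpace ℝ (Fin n), x ≠ 0 → ∃ r > 0,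
      (0 : EuclideanSpace ℝ (Fin n)) ∉ closedBall x r ∧
      ∀ v : EuclideanSpace ℝ (Fin n) → ℝ, (∀ y, 0 ≤ v y) → LocallyLipschitz v →
        (∀ y ∉ ball x r, v y = u y) →
        acEnergy 1 u (ball x r) ≤ acEnergy 1 v (ball x r) := by
  classical
  intro x hx
  haveI : Fintype Γ := Fintype.ofFinite Γ
  haveI : Nonempty (Fin n) := ⟨⟨0, by omega⟩⟩
  haveI : Nontrivial (EuclideanSpace ℝ (Fin n)) := inferInstance
  obtain ⟨hu0, huLip, husym, humin⟩ := hmin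
  -- coercion of group elements
  set e : Γ → (EuclideanSpace ℝ (Fin n) ≃ₗᵢ[ℝ] EuclideanSpace ℝ (Fin n)) :=
    fun g => (g : EuclideanSpace ℝ (Fin n) ≃ₗᵢ[ℝ] EuclideanSpace ℝ (Fin n)) with he_def
  have he_mul : ∀ (g h : Γ) (y : EuclideanSpace ℝ (Fin n)), e (g * h) y = e g (e h y) := by
    intro g h y; simp [he_def]
  have he_one : ∀ y : EuclideanSpace ℝ (Fin n), e 1 y = y := by
    intro y; simp [he_def]
  have he_cancel : ∀ (g : Γ) (y : EuclideanSpace ℝ (Fin n)), e g (e g⁻¹ y) = y := by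
    intro g y; rw [← he_mul, mul_inv_cancel, he_one]
  have he_cancel' : ∀ (g : Γ) (y : EuclideanSpace ℝ (Fin n)), e g⁻¹ (e g y) = y := by
    intro g y; rw [← he_mul, inv_mul_cancel, he_one]
  have he_dist : ∀ (g : Γ) (a b : EuclideanSpace ℝ (Fin n)),
      dist (e g a) (e g b) = dist a b := by
    intro g a b; exact (e g).isometry.dist_eq a b
  -- separation radius
  let T : Finset Γ := Finset.univ.filter (fun g => g ≠ 1)
  let D : Finset ℝ := insert ‖x‖ (T.image (fun g => dist x (e g x)))
  have hDne : D.Nonempty := ⟨‖x‖, Finset.mem_insert_self _ _⟩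
  set d := D.min' hDne with hd_def
  have hdpos : 0 < d := by
    rw [hd_def]
    rw [Finset.lt_min'_iff]
    intro b hb
    rcases Finset.mem_insert.1 hb with rfl | hb
    · exact norm_pos_iff.2 hx
    · obtain ⟨g, hgT, rfl⟩ := Finset.mem_image.1 hb
      have hg1 : g ≠ 1 := (Finset.mem_filter.1 hgT).2
      have hne : e g x ≠ x := by
        intro hgx
        exact hg1 (by
          have h1 : (g : EuclideanSpace ℝ (Fin n) ≃ₗᵢ[ℝ] EuclideanSpace ℝ (Fin n)) = 1 :=
            hfree _ g.2 ⟨x, hx, hgx⟩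
          exact_mod_cast OneMemClass.coe_eq_one.1 h1)
      exact dist_pos.2 (Ne.symm hne)
  have hd_norm : d ≤ ‖x‖ := Finset.min'_le _ _ (Finset.mem_insert_self _ _)
  have hd_le : ∀ g : Γ, g ≠ 1 → d ≤ dist x (e g x) := by
    intro g hg
    exact Finset.min'_le _ _ (Finset.mem_insert_of_mem
      (Finset.mem_image_of_mem _ (Finset.mem_filter.2 ⟨Finset.mem_univ g, hg⟩)))
  set r := d / 3 with hr_def
  have hrpos : 0 < r := by positivity
  have hr_lt_d : r < d := by rw [hr_def]; linarith
  refine ⟨r, hrpos, ?_, ?_⟩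
  · -- 0 ∉ closedBall x r
    intro h0
    have : dist (0 : EuclideanSpace ℝ (Fin n)) x ≤ r := mem_closedBall.1 h0
    rw [dist_comm, dist_zero_right] at this
    linarith [hd_norm, hr_lt_d]
  -- separation of the orbit balls
  have hsep : ∀ g h : Γ, g ≠ h → 3 * r ≤ dist (e g x) (e h x) := by
    intro g h hgh
    have h1 : dist (e g x) (e h x) = dist x (e (g⁻¹ * h) x) := by
      rw [he_mul g⁻¹ h x, ← he_dist g⁻¹ (e g x) (e h x), he_cancel' g x]
    have h2 : g⁻¹ * h ≠ 1 := by
      intro hcon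
      exact hgh (by
        have := congrArg (fun k => g * k) hcon
        simpa [mul_assoc] using this.symm)
    rw [h1]
    have := hd_le _ h2
    rw [hr_def]; linarith
  have hdisj : Pairwise (Function.onFun Disjoint fun g : Γ => ball (e g x) r) := by
    intro g h hgh
    exact ball_disjoint_ball (by linarith [hsep g h hgh])
  -- competitors
  intro v hv0 hvLip hvu
  set φ : EuclideanSpace ℝ (Fin n) → ℝ := fun y => v y - u y with hφ_def
  have hφ0 : ∀ y ∉ ball x r, φ y = 0 := by
    intro y hy; rw [hφ_def]; simp [hvu y hy]
  set w : EuclideanSpace ℝ (Fin n) → ℝ := fun y => u y + ∑ g : Γ, φ (e g⁻¹ y) with hw_def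
  have hmem_iff : ∀ (g : Γ) (y : EuclideanSpace ℝ (Fin n)),
      e g⁻¹ y ∈ ball x r ↔ y ∈ ball (e g x) r := by
    intro g y
    rw [mem_ball, mem_ball, ← he_dist g (e g⁻¹ y) x, he_cancel g y]
  have hw_eq_v : ∀ (g : Γ), ∀ y ∈ ball (e g x) r, w y = v (e g⁻¹ y) := by
    intro g y hy
    have hsum : ∑ h : Γ, φ (e h⁻¹ y) = φ (e g⁻¹ y) := by
      apply Finset.sum_eq_single_of_mem g (Finset.mem_univ g)
      intro h _ hne
      apply hφ0
      intro hmem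
      have hyh : y ∈ ball (e h x) r := (hmem_iff h y).1 hmem
      exact (Set.disjoint_left.1 (hdisj hne) hyh) hy
    have huy : u (e g⁻¹ y) = u y := husym _ (g⁻¹ : Γ).2 y
    rw [hw_def]
    simp only [hsum, hφ_def]
    simp only [hφ_def] at hsum; rw [hsum, huy]; ring
  have hw_eq_u : ∀ y : EuclideanSpace ℝ (Fin n),
      (∀ g : Γ, y ∉ ball (e g x) r) → w y = u y := by
    intro y hy
    rw [hw_def]
    have : ∀ g : Γ, φ (e g⁻¹ y) = 0 := by
      intro g
      apply hφ0
      intro hmem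
      exact hy g ((hmem_iff g y).1 hmem)
    simp [this]
  have hw0 : ∀ y, 0 ≤ w y := by
    intro y
    by_cases hex : ∃ g : Γ, y ∈ ball (e g x) r
    · obtain ⟨g, hg⟩ := hex
      rw [hw_eq_v g y hg]; exact hv0 _
    · push_neg at hex
      rw [hw_eq_u y hex]; exact hu0 _
  have hwLip : LocallyLipschitz w := by
    rw [hw_def]
    apply huLip.add
    apply locallyLipschitz_finsum
    intro g _
    exact (hvLip.sub huLip).comp (e g⁻¹).isometry.lipschitz.locallyLipschitz
  have hwsym : IsSymmetricUnder Γ w := by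
    intro k hk y
    set k' : Γ := ⟨k, hk⟩ with hk'_def
    have hky : k y = e k' y := rfl
    rw [hw_def]
    simp only [hky]
    have h1 : u (e k' y) = u y := husym k hk y
    have h2 : ∑ g : Γ, φ (e g⁻¹ (e k' y)) = ∑ g : Γ, φ (e g⁻¹ y) := by
      rw [← Equiv.sum_comp (Equiv.mulLeft k') (fun g : Γ => φ (e g⁻¹ (e k' y)))]
      apply Finset.sum_congr rfl
      intro g _
      congr 1
      show e (k' * g)⁻¹ (e k' y) = e g⁻¹ y
      rw [mul_inv_rev, he_mul, he_cancel']
    rw [h1, h2]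
  set R := ‖x‖ + r + 1 with hR_def
  have hRpos : 0 < R := by
    have := norm_nonneg x; rw [hR_def]; linarith
  have hball_sub : ∀ g : Γ, ball (e g x) r ⊆ ball (0 : EuclideanSpace ℝ (Fin n)) R := by
    intro g y hy
    have h1 : dist y (e g x) < r := mem_ball.1 hy
    have h2 : dist (e g x) 0 = ‖x‖ := by
      rw [dist_zero_right]; exact (e g).norm_map x
    rw [mem_ball]
    calc dist y 0 ≤ dist y (e g x) + dist (e g x) 0 := dist_triangle _ _ _
      _ < r + ‖x‖ := by rw [h2]; linarith
      _ < R := by rw [hR_def]; linarith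
  have hwu_out : ∀ y ∉ ball (0 : EuclideanSpace ℝ (Fin n)) R, w y = u y := by
    intro y hy
    apply hw_eq_u
    intro g hmem
    exact hy (hball_sub g hmem)
  have key := humin R hRpos w hw0 hwLip hwsym hwu_out
  -- notation for the integrand
  set Fn : (EuclideanSpace ℝ (Fin n) → ℝ) → EuclideanSpace ℝ (Fin n) → ℝ :=
    fun f y => ‖gradient f y‖ ^ 2 +
      (1:ℝ) ^ 2 * Set.indicator {z | 0 < f z} (fun _ => (1 : ℝ)) y with hFn_def
  have hac : ∀ (f : EuclideanSpace ℝ (Fin n) → ℝ) (S : Set (EuclideanSpace ℝ (Fin n))),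
      acEnergy 1 f S = ∫ y in S, Fn f y := by
    intro f S; rw [acEnergy]
  have hFn_comp : ∀ (f : EuclideanSpace ℝ (Fin n) → ℝ)
      (iso : EuclideanSpace ℝ (Fin n) ≃ₗᵢ[ℝ] EuclideanSpace ℝ (Fin n))
      (z : EuclideanSpace ℝ (Fin n)),
      Fn (fun y => f (iso y)) z = Fn f (iso z) := by
    intro f iso z
    rw [hFn_def]
    simp only
    rw [norm_gradient_comp_iso]
    simp [Set.indicator_apply, Set.mem_setOf_eq]
  -- per-ball integral identities
  have hpre : ∀ g : Γ, ball (e g x) r = (e g⁻¹) ⁻¹' (ball x r) := by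
    intro g
    ext y
    simp only [Set.mem_preimage]
    exact (hmem_iff g y).symm
  have hchange : ∀ (g : Γ) (f : EuclideanSpace ℝ (Fin n) → ℝ),
      (∫ y in ball (e g x) r, Fn f (e g⁻¹ y)) = ∫ z in ball x r, Fn f z := by
    intro g f
    rw [hpre g]
    exact (e g⁻¹).measurePreserving.setIntegral_preimage_emb
      (e g⁻¹).toHomeomorph.measurableEmbedding (Fn f) (ball x r)
  have hIw : ∀ g : Γ, (∫ y in ball (e g x) r, Fn w y) = ∫ z in ball x r, Fn v z := by
    intro g
    have h1 : (∫ y in ball (e g x) r, Fn w y)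
        = ∫ y in ball (e g x) r, Fn (fun z => v (e g⁻¹ z)) y := by
      apply setIntegral_congr_fun measurableSet_ball
      intro y hy
      have hgrad : gradient w y = gradient (fun z => v (e g⁻¹ z)) y := by
        apply Filter.EventuallyEq.gradient_eq
        exact Filter.eventuallyEq_of_mem (isOpen_ball.mem_nhds hy)
          (fun z hz => hw_eq_v g z hz)
      rw [hFn_def]
      simp only
      rw [hgrad]
      congr 1
      simp [Set.indicator_apply, Set.mem_setOf_eq, hw_eq_v g y hy]
    have h2 : (∫ y in ball (e g x) r, Fn (fun z => v (e g⁻¹ z)) y)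
        = ∫ y in ball (e g x) r, Fn v (e g⁻¹ y) := by
      apply setIntegral_congr_fun measurableSet_ball
      intro y _
      exact hFn_comp v (e g⁻¹) y
    rw [h1, h2, hchange g v]
  have hIu : ∀ g : Γ, (∫ y in ball (e g x) r, Fn u y) = ∫ z in ball x r, Fn u z := by
    intro g
    have hueq : (fun z => u (e g⁻¹ z)) = u := funext (fun z => husym _ (g⁻¹ : Γ).2 z)
    have h1 : (∫ y in ball (e g x) r, Fn u y)
        = ∫ y in ball (e g x) r, Fn u (e g⁻¹ y) := by
      apply setIntegral_congr_fun measurableSet_ball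
      intro y _
      conv_lhs => rw [← hueq]
      exact hFn_comp u (e g⁻¹) y
    rw [h1, hchange g u]
  -- splitting the big ball
  set U : Set (EuclideanSpace ℝ (Fin n)) := ⋃ g : Γ, ball (e g x) r with hU_def
  have hUm : MeasurableSet U := MeasurableSet.iUnion (fun g => measurableSet_ball)
  have hUA : U ⊆ ball (0 : EuclideanSpace ℝ (Fin n)) R := by
    rw [hU_def]
    exact Set.iUnion_subset hball_sub
  set A := ball (0 : EuclideanSpace ℝ (Fin n)) R with hA_def
  have hAm : MeasurableSet A := measurableSet_ball
  have hAb : Bornology.IsBounded A := isBounded_ball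
  have hint : ∀ (f : EuclideanSpace ℝ (Fin n) → ℝ), LocallyLipschitz f →
      ∀ s : Set (EuclideanSpace ℝ (Fin n)), MeasurableSet s → s ⊆ A →
      IntegrableOn (Fn f) s := by
    intro f hf s hsm hsA
    have := acIntegrable f hf hsm (hAb.subset hsA)
    rw [hFn_def]
    exact this
  have hsplit : ∀ (f : EuclideanSpace ℝ (Fin n) → ℝ), LocallyLipschitz f →
      (∫ y in A, Fn f y)
        = (∫ y in A \ U, Fn f y) + ∑ g : Γ, ∫ y in ball (e g x) r, Fn f y := by
    intro f hf
    have h1 : (∫ y in A, Fn f y) = ∫ y in (A \ U) ∪ U, Fn f y := by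
      rw [Set.diff_union_of_subset hUA]
    rw [h1, setIntegral_union Set.disjoint_sdiff_left hUm
      (hint f hf _ (hAm.diff hUm) Set.diff_subset)
      (hint f hf _ hUm hUA)]
    congr 1
    exact integral_iUnion_fintype (fun g => measurableSet_ball) hdisj
      (fun g => hint f hf _ measurableSet_ball ((Set.subset_iUnion _ g).trans hUA))
  -- a.e. equality off the orbit balls
  have hrest : (∫ y in A \ U, Fn w y) = ∫ y in A \ U, Fn u y := by
    apply setIntegral_congr_ae (hAm.diff hUm)
    set Nset : Set (EuclideanSpace ℝ (Fin n)) := ⋃ g : Γ, sphere (e g x) r with hNset_def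
    have hN : volume Nset = 0 :=
      measure_iUnion_null (fun g => Measure.addHaar_sphere volume (e g x) r)
    have hae : ∀ᵐ y : EuclideanSpace ℝ (Fin n), y ∉ Nset := by
      have hset : {y : EuclideanSpace ℝ (Fin n) | ¬ y ∉ Nset} = Nset := by
        ext y; simp [not_not]
      rw [MeasureTheory.ae_iff, hset]
      exact hN
    filter_upwards [hae] with y hyN hyAU
    -- y is in the open complement of the closed balls
    have hyV : ∀ g : Γ, y ∉ closedBall (e g x) r := by
      intro g hyc
      have h1 : y ∉ ball (e g x) r := by
        intro hball
        exact hyAU.2 (Set.mem_iUnion.2 ⟨g, hball⟩)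
      have h2 : y ∉ sphere (e g x) r := by
        intro hs
        exact hyN (by rw [hNset_def]; exact Set.mem_iUnion.2 ⟨g, hs⟩)
      rcases lt_or_eq_of_le (mem_closedBall.1 hyc) with hlt | heq
      · exact h1 (mem_ball.1 hlt |> fun h => mem_ball.2 h)
      · exact h2 (mem_sphere.2 heq)
    have hVopen : IsOpen ((⋃ g : Γ, closedBall (e g x) r)ᶜ) :=
      (isClosed_iUnion_of_finite (fun g : Γ => Metric.isClosed_closedBall)).isOpen_compl
    have hyVmem : y ∈ (⋃ g : Γ, closedBall (e g x) r)ᶜ := by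
      simp only [Set.mem_compl_iff, Set.mem_iUnion, not_exists]
      exact fun g => hyV g
    have hwu_nbhd : w =ᶠ[𝓝 y] u := by
      apply Filter.eventuallyEq_of_mem (hVopen.mem_nhds hyVmem)
      intro z hz
      apply hw_eq_u
      intro g hball
      simp only [Set.mem_compl_iff, Set.mem_iUnion, not_exists] at hz
      exact hz g (ball_subset_closedBall hball)
    have hgrad : gradient w y = gradient u y := hwu_nbhd.gradient_eq
    have hwy : w y = u y := hwu_nbhd.eq_of_nhds
    rw [hFn_def]
    simp only
    rw [hgrad]
    congr 1
    simp [Set.indicator_apply, Set.mem_setOf_eq, hwy]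
  -- assembling
  rw [hac, hac, hsplit u huLip, hsplit w hwLip, hrest] at key
  have hsum_u : ∑ g : Γ, (∫ y in ball (e g x) r, Fn u y)
      = (Fintype.card Γ : ℝ) * ∫ z in ball x r, Fn u z := by
    rw [Finset.sum_congr rfl (fun g _ => hIu g)]
    rw [Finset.sum_const, Finset.card_univ, nsmul_eq_mul]
  have hsum_w : ∑ g : Γ, (∫ y in ball (e g x) r, Fn w y)
      = (Fintype.card Γ : ℝ) * ∫ z in ball x r, Fn v z := by
    rw [Finset.sum_congr rfl (fun g _ => hIw g)]
    rw [Finset.sum_const, Finset.card_univ, nsmul_eq_mul]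
  rw [hsum_u, hsum_w] at key
  haveI : Nonempty Γ := ⟨1⟩
  have hcard : (0 : ℝ) < (Fintype.card Γ : ℝ) := by
    exact_mod_cast (Fintype.card_pos : 0 < Fintype.card Γ)
  have hfinal : (∫ z in ball x r, Fn u z) ≤ ∫ z in ball x r, Fn v z := by
    have := le_of_add_le_add_left key
    exact le_of_mul_le_mul_left this hcard
  rw [hac, hac]
  exact hfinal

end Main
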